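/- In a finite chordal graph, every X–Y separator of minimum size between two distinct maximal cliques X and Y is a minimal (equivalently tight) separator of the graph, and hence a clique. -/

import Mathlib

open SimpleGraph

/-- A graph is chordal if every cycle of length at least 4 has a chord. -/
def IsChordal {V : Type*} (G : SimpleGraph V) : Prop :=
  ∀ (v : V) (c : G.Walk v v), c.IsCycle → 4 ≤ c.length →
    ∃ x y, x ∈ c.support ∧ y ∈ c.support ∧ G.Adj x y ∧ s(x, y) ∉ c.edges

/-- An inclusion-maximal clique. -/
def IsMaxClique {V : Type*} (G : SimpleGraph V) (X : Set V) : Prop :=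
  G.IsClique X ∧ ∀ Y : Set V, G.IsClique Y → X ⊆ Y → X = Y

/-- `S` separates the vertex sets `A` and `B`: every walk from `A` to `B` meets `S`. -/
def SeparatesSets {V : Type*} (G : SimpleGraph V) (A B S : Set V) : Prop :=
  ∀ a ∈ A, ∀ b ∈ B, ∀ p : G.Walk a b, ∃ s ∈ S, s ∈ p.support

/-- `X` is a `u`–`v` separator: `u, v ∉ X` and every `u`–`v` walk meets `X`. -/
def IsSepBetween {V : Type*} (G : SimpleGraph V) (u v : V) (X : Set V) : Prop :=
  u ∉ X ∧ v ∉ X ∧ ∀ p : G.Walk u v, ∃ x ∈ X, x ∈ p.support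

/-- `X` is a minimal separator: for some `u`, `v` it is inclusion-minimal
among `u`–`v` separators. -/
def IsMinimalSeparator {V : Type*} (G : SimpleGraph V) (X : Set V) : Prop :=
  ∃ u v, IsSepBetween G u v X ∧ ∀ Y ⊆ X, IsSepBetween G u v Y → Y = X

namespace ChordalSep

variable {V : Type*} {G : SimpleGraph V}

/-- Take the first `n` edges of a walk. -/
def wtake {u v : V} : (p : G.Walk u v) → (n : ℕ) → G.Walk u (p.getVert n)
  | Walk.nil, _ => Walk.nil
  | Walk.cons _ _, 0 => Walk.nil
  | Walk.cons h q, (n+1) => Walk.cons h (wtake q n)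

/-- Drop the first `n` edges of a walk. -/
def wdrop {u v : V} : (p : G.Walk u v) → (n : ℕ) → G.Walk (p.getVert n) v
  | Walk.nil, _ => Walk.nil
  | Walk.cons h q, 0 => Walk.cons h q
  | Walk.cons _ q, (n+1) => wdrop q n

lemma length_wtake {u v : V} (p : G.Walk u v) (n : ℕ) :
    (wtake p n).length = min n p.length := by
  induction p generalizing n with
  | nil => simp [wtake]
  | cons h q ih =>
    cases n with
    | zero => simp [wtake]; rfl
    | succ n => simp [wtake, ih, Nat.succ_min_succ]

lemma length_wdrop {u v : V} (p : G.Walk u v) (n : ℕ) :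
    (wdrop p n).length = p.length - n := by
  induction p generalizing n with
  | nil => simp [wdrop]
  | cons h q ih =>
    cases n with
    | zero => simp [wdrop]; rfl
    | succ n => simp [wdrop, ih]

lemma support_wtake_prefix {u v : V} (p : G.Walk u v) (n : ℕ) :
    ∃ l, p.support = (wtake p n).support ++ l := by
  induction p generalizing n with
  | nil => exact ⟨[], by simp [wtake]⟩
  | cons h q ih =>
    cases n with
    | zero => exact ⟨q.support, by simp [wtake]; rfl⟩
    | succ n =>
      obtain ⟨l, hl⟩ := ih (n := n)
      exact ⟨l, by simp [wtake, hl]⟩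

lemma support_wtake_subset {u v : V} (p : G.Walk u v) (n : ℕ) :
    (wtake p n).support ⊆ p.support := by
  obtain ⟨l, hl⟩ := support_wtake_prefix p n
  rw [hl]; exact List.subset_append_left _ _

lemma support_wdrop_subset {u v : V} (p : G.Walk u v) (n : ℕ) :
    (wdrop p n).support ⊆ p.support := by
  induction p generalizing n with
  | nil =>
    simp only [wdrop]
    exact fun z hz => by simpa using hz
  | cons h q ih =>
    cases n with
    | zero => simp [wdrop]; exact List.Subset.refl _
    | succ n =>
      intro z hz
      simp only [Walk.support_cons, List.mem_cons]
      exact Or.inr (ih n hz)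

lemma edges_wtake_subset {u v : V} (p : G.Walk u v) (n : ℕ) :
    (wtake p n).edges ⊆ p.edges := by
  induction p generalizing n with
  | nil => simp [wtake]
  | cons h q ih =>
    cases n with
    | zero => simp [wtake]; exact List.nil_subset _
    | succ n =>
      intro e he
      have he' : e ∈ (Walk.cons h (wtake q n)).edges := he
      show e ∈ (Walk.cons h q).edges
      simp only [Walk.edges_cons, List.mem_cons] at he' ⊢
      exact he'.imp id (fun h' => ih n h')

lemma getVert_wtake {u v : V} (p : G.Walk u v) (n i : ℕ) (hi : i ≤ n) :
    (wtake p n).getVert i = p.getVert i := by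
  induction p generalizing n i with
  | nil => simp [wtake]
  | cons h q ih =>
    cases n with
    | zero =>
      have : i = 0 := Nat.le_zero.mp hi
      subst this; simp [wtake]; rfl
    | succ n =>
      cases i with
      | zero => simp [wtake]
      | succ i => simpa [wtake] using ih n i (Nat.succ_le_succ_iff.mp hi)

lemma isPath_wtake {u v : V} {p : G.Walk u v} (hp : p.IsPath) (n : ℕ) :
    (wtake p n).IsPath := by
  rw [Walk.isPath_def]
  obtain ⟨l, hl⟩ := support_wtake_prefix p n
  have := hp.support_nodup
  rw [hl] at this
  exact this.of_append_left

lemma getVert_mem_support {u v : V} (p : G.Walk u v) (i : ℕ) :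
    p.getVert i ∈ p.support := by
  rcases le_or_gt i p.length with h | h
  · exact Walk.mem_support_iff_exists_getVert.mpr ⟨i, rfl, h⟩
  · rw [Walk.getVert_of_length_le p h.le]
    exact p.end_mem_support

lemma edge_getVert_succ_mem_edges {u v : V} (p : G.Walk u v) (i : ℕ) (hi : i < p.length) :
    s(p.getVert i, p.getVert (i+1)) ∈ p.edges := by
  induction p generalizing i with
  | nil => simp at hi
  | cons h q ih =>
    cases i with
    | zero => simp
    | succ i =>
      simp only [Walk.getVert_cons_succ, Walk.edges_cons, List.mem_cons]
      exact Or.inr (ih i (by simpa [Walk.length_cons, Nat.succ_lt_succ_iff] using hi))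


section Min
variable {P : V → Prop} {a b : V}

lemma exists_min_path (h : ∃ p : G.Walk a b, ∀ z ∈ p.support, P z) :
    ∃ p : G.Walk a b, (∀ z ∈ p.support, P z) ∧ p.IsPath ∧
      (∀ q : G.Walk a b, (∀ z ∈ q.support, P z) → p.length ≤ q.length) := by
  have hQ : ∃ n, ∃ p : G.Walk a b, p.length = n ∧ ∀ z ∈ p.support, P z := by
    obtain ⟨p, hp⟩ := h
    exact ⟨p.length, p, rfl, hp⟩
  classical
  obtain ⟨p, hlen, hp⟩ := Nat.find_spec hQ
  have hmin : ∀ q : G.Walk a b, (∀ z ∈ q.support, P z) → Nat.find hQ ≤ q.length :=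
    fun q hq => Nat.find_le ⟨q, rfl, hq⟩
  refine ⟨p.bypass, fun z hz => hp z (p.support_bypass_subset hz), p.bypass_isPath, ?_⟩
  have h1 : p.bypass.length ≤ Nat.find hQ := hlen ▸ p.length_bypass_le
  have h2 : Nat.find hQ ≤ p.bypass.length :=
    hmin _ (fun z hz => hp z (p.support_bypass_subset hz))
  intro q hq
  exact h1.trans (hmin q hq)

lemma not_adj_of_min (p : G.Walk a b)
    (hp : ∀ z ∈ p.support, P z)
    (hmin : ∀ q : G.Walk a b, (∀ z ∈ q.support, P z) → p.length ≤ q.length)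
    {i j : ℕ} (hij : i + 2 ≤ j) (hj : j ≤ p.length) :
    ¬ G.Adj (p.getVert i) (p.getVert j) := by
  intro hadj
  set q : G.Walk a b := (wtake p i).append (Walk.cons hadj (wdrop p j)) with hq
  have hqP : ∀ z ∈ q.support, P z := by
    intro z hz
    rw [hq, Walk.mem_support_append_iff] at hz
    rcases hz with hz | hz
    · exact hp z (support_wtake_subset p i hz)
    · rw [Walk.support_cons, List.mem_cons] at hz
      rcases hz with rfl | hz
      · exact hp _ (getVert_mem_support p i)
      · exact hp z (support_wdrop_subset p j hz)
  have hlen : q.length = (min i p.length) + 1 + (p.length - j) := by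
    rw [hq, Walk.length_append, Walk.length_cons, length_wtake, length_wdrop]
    omega
  have := hmin q hqP
  rw [hlen] at this
  omega

lemma mem_edges_of_min (p : G.Walk a b)
    (hp : ∀ z ∈ p.support, P z)
    (hmin : ∀ q : G.Walk a b, (∀ z ∈ q.support, P z) → p.length ≤ q.length)
    {x y : V} (hx : x ∈ p.support) (hy : y ∈ p.support) (hadj : G.Adj x y) :
    s(x, y) ∈ p.edges := by
  obtain ⟨i, rfl, hi⟩ := Walk.mem_support_iff_exists_getVert.mp hx
  obtain ⟨j, rfl, hj⟩ := Walk.mem_support_iff_exists_getVert.mp hy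
  rcases lt_trichotomy i j with hlt | heq | hlt
  · have hj1 : j = i + 1 := by
      by_contra hne
      exact not_adj_of_min p hp hmin (by omega) hj hadj
    subst hj1
    exact edge_getVert_succ_mem_edges p i (by omega)
  · subst heq
    exact absurd hadj (G.irrefl)
  · have hi1 : i = j + 1 := by
      by_contra hne
      exact not_adj_of_min p hp hmin (by omega) hi hadj.symm
    subst hi1
    rw [Sym2.eq_swap]
    exact edge_getVert_succ_mem_edges p j (by omega)

end Min

/-! ### Reachability avoiding a set -/

def Reach (G : SimpleGraph V) (S : Set V) (a b : V) : Prop :=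
  ∃ p : G.Walk a b, ∀ z ∈ p.support, z ∉ S

def Side (G : SimpleGraph V) (S A : Set V) : Set V :=
  {z | ∃ a, a ∈ A ∧ a ∉ S ∧ Reach G S a z}

variable {S A X Y : Set V}

lemma Reach.not_mem_right {a b : V} (h : Reach G S a b) : b ∉ S := by
  obtain ⟨p, hp⟩ := h
  exact hp b p.end_mem_support

lemma reach_of_mem_support {c c' : V} (p : G.Walk c c') (hp : ∀ z ∈ p.support, z ∉ S)
    {z : V} (hz : z ∈ p.support) : Reach G S c z := by
  classical
  exact ⟨p.takeUntil z hz, fun w hw => hp w (p.support_takeUntil_subset hz hw)⟩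

lemma mem_side_of {a : V} (ha : a ∈ A) (haS : a ∉ S) : a ∈ Side G S A :=
  ⟨a, ha, haS, Walk.nil, by simpa using haS⟩

lemma side_not_mem {z : V} (hz : z ∈ Side G S A) : z ∉ S := by
  obtain ⟨a, _, _, hr⟩ := hz
  exact hr.not_mem_right

lemma side_adj {z w : V} (hz : z ∈ Side G S A) (hadj : G.Adj z w) (hw : w ∉ S) :
    w ∈ Side G S A := by
  obtain ⟨a, haA, haS, p, hp⟩ := hz
  refine ⟨a, haA, haS, p.concat hadj, ?_⟩
  intro x hx
  rw [Walk.support_concat, List.mem_append] at hx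
  rcases hx with hx | hx
  · exact hp x hx
  · simp only [List.mem_singleton] at hx; subst hx; exact hw

lemma side_conn (hA : G.IsClique A) {c c' : V} (hc : c ∈ Side G S A) (hc' : c' ∈ Side G S A) :
    ∃ p : G.Walk c c', ∀ z ∈ p.support, z ∈ Side G S A := by
  obtain ⟨a, haA, haS, p, hp⟩ := hc
  obtain ⟨a', haA', haS', p', hp'⟩ := hc'
  have hreach : Reach G S a a' := by
    rcases eq_or_ne a a' with rfl | hne
    · exact ⟨Walk.nil, by simpa using haS⟩
    · refine ⟨Walk.cons (hA haA haA' hne) Walk.nil, ?_⟩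
      intro z hz
      simp only [Walk.support_cons, Walk.support_nil, List.mem_cons, List.mem_singleton,
        List.not_mem_nil, or_false] at hz
      rcases hz with rfl | rfl
      · exact haS
      · exact haS'
  obtain ⟨q, hq⟩ := hreach
  set W : G.Walk c c' := p.reverse.append (q.append p') with hW
  have hWav : ∀ z ∈ W.support, z ∉ S := by
    intro z hz
    rw [hW, Walk.mem_support_append_iff] at hz
    rcases hz with hz | hz
    · exact hp z (by rwa [Walk.support_reverse, List.mem_reverse] at hz)
    · rw [Walk.mem_support_append_iff] at hz
      exact hz.elim (hq z) (hp' z)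
  refine ⟨W, fun z hz => ?_⟩
  exact ⟨a, haA, haS, (⟨p, hp⟩ : Reach G S a c).elim
    (fun r hr => by
      obtain ⟨t, ht⟩ := reach_of_mem_support W hWav hz
      exact ⟨r.append t, fun w hw => by
        rw [Walk.mem_support_append_iff] at hw
        exact hw.elim (hr w) (ht w)⟩)⟩

/-! ### Separation basics -/

section Sep

lemma sep_symm (h : SeparatesSets G X Y S) : SeparatesSets G Y X S := by
  intro b hb a ha p
  obtain ⟨s, hsS, hsp⟩ := h a ha b hb p.reverse
  exact ⟨s, hsS, by rwa [Walk.support_reverse, List.mem_reverse] at hsp⟩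

lemma sides_disjoint (hS : SeparatesSets G X Y S) {z : V}
    (hzX : z ∈ Side G S X) (hzY : z ∈ Side G S Y) : False := by
  obtain ⟨a, haX, haS, p, hp⟩ := hzX
  obtain ⟨b, hbY, hbS, q, hq⟩ := hzY
  obtain ⟨s, hsS, hsp⟩ := hS a haX b hbY (p.append q.reverse)
  rw [Walk.mem_support_append_iff] at hsp
  rcases hsp with hsp | hsp
  · exact hp s hsp hsS
  · exact hq s (by rwa [Walk.support_reverse, List.mem_reverse] at hsp) hsS

/-- Every vertex of a minimum `X`–`Y` separator has a neighbour in the `X`-side. -/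
lemma sep_nbr (hS : SeparatesSets G X Y S)
    (heff : ∀ S' : Set V, SeparatesSets G X Y S' → S.ncard ≤ S'.ncard)
    (hSfin : S.Finite) (hXcl : G.IsClique X) (hXS : ∃ a, a ∈ X ∧ a ∉ S)
    {s : V} (hs : s ∈ S) : ∃ c ∈ Side G S X, G.Adj s c := by
  classical
  by_cases hsX : s ∈ X
  · obtain ⟨a, haX, haS⟩ := hXS
    have hne : s ≠ a := fun h => haS (h ▸ hs)
    exact ⟨a, mem_side_of haX haS, hXcl hsX haX hne⟩
  by_contra hno
  push_neg at hno
  have hS' : SeparatesSets G X Y (S \ {s}) := by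
    intro a ha b hb p
    obtain ⟨t, htS, htp⟩ := hS a ha b hb p
    by_cases hms : ∃ t', t' ∈ S \ {s} ∧ t' ∈ p.support
    · obtain ⟨t', h1, h2⟩ := hms
      exact ⟨t', h1, h2⟩
    push_neg at hms
    -- every vertex of the walk lying in S equals s
    have hchar : ∀ z ∈ p.support, z ∈ S → z = s := by
      intro z hz1 hz2
      by_contra hzs
      exact hms z ⟨hz2, hzs⟩ hz1
    have hts : t = s := hchar t htp htS
    subst hts
    exfalso
    have haS : a ∉ S := by
      intro haS
      exact hsX ((hchar a p.start_mem_support haS) ▸ ha)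
    have hta : t ≠ a := fun h => haS (h ▸ htS)
    set q := p.takeUntil t htp with hqdef
    set r := q.reverse with hrdef
    have hrn : ¬ r.Nil := Walk.not_nil_of_ne hta
    have hcount : r.support.count t = 1 := by
      rw [hrdef, Walk.support_reverse, List.count_reverse]
      exact p.count_support_takeUntil_eq_one htp
    have hconsup : t :: r.tail.support = r.support := Walk.cons_support_tail hrn
    have hnot : t ∉ r.tail.support := by
      rw [← hconsup, List.count_cons_self] at hcount
      exact List.count_eq_zero.mp (by omega)
    have hrsub : ∀ z ∈ r.tail.support, z ∈ p.support := by
      intro z hz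
      have : z ∈ r.support := by rw [← hconsup]; exact List.mem_cons_of_mem _ hz
      rw [hrdef, Walk.support_reverse, List.mem_reverse] at this
      exact p.support_takeUntil_subset htp this
    have hrav : ∀ z ∈ r.tail.support, z ∉ S := by
      intro z hz hzS
      exact hnot ((hchar z (hrsub z hz) hzS) ▸ hz)
    -- w := second vertex of r is adjacent to s and in the X-side
    have hadj : G.Adj t (r.getVert 1) := r.adj_snd hrn
    have hwside : r.getVert 1 ∈ Side G S X := by
      refine ⟨a, ha, haS, r.tail.reverse, ?_⟩
      intro z hz
      rw [Walk.support_reverse, List.mem_reverse] at hz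
      exact hrav z hz
    exact hno _ hwside hadj
  have hlt : (S \ {s}).ncard < S.ncard := by
    have : (S \ {s}).ncard = S.ncard - 1 := by
      rw [Set.ncard_diff_singleton_of_mem hs]
    have hpos : 0 < S.ncard := (Set.ncard_pos hSfin).mpr ⟨s, hs⟩
    omega
  exact absurd (heff _ hS') (by omega)

end Sep

/-! ### Dirac-type lemma: two separator vertices with neighbours on both sides are adjacent -/

section Dirac
variable {S X Y : Set V}

lemma adj_of_sep (hG : IsChordal G) (hS : SeparatesSets G X Y S)
    (hXcl : G.IsClique X) (hYcl : G.IsClique Y)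
    {s1 s2 : V} (h1 : s1 ∈ S) (h2 : s2 ∈ S) (hne : s1 ≠ s2)
    (hx1 : ∃ c ∈ Side G S X, G.Adj s1 c) (hx2 : ∃ c ∈ Side G S X, G.Adj s2 c)
    (hy1 : ∃ c ∈ Side G S Y, G.Adj s1 c) (hy2 : ∃ c ∈ Side G S Y, G.Adj s2 c) :
    G.Adj s1 s2 := by
  by_contra hnadj
  -- minimal walk from s1 to s2 through the X-side
  obtain ⟨cx1, hcx1, hax1⟩ := hx1
  obtain ⟨cx2, hcx2, hax2⟩ := hx2
  obtain ⟨cy1, hcy1, hay1⟩ := hy1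
  obtain ⟨cy2, hcy2, hay2⟩ := hy2
  have hexX : ∃ p : G.Walk s1 s2, ∀ z ∈ p.support,
      z = s1 ∨ z = s2 ∨ z ∈ Side G S X := by
    obtain ⟨q, hq⟩ := side_conn hXcl hcx1 hcx2
    refine ⟨Walk.cons hax1 (q.concat hax2.symm), ?_⟩
    intro z hz
    rw [Walk.support_cons, List.mem_cons] at hz
    rcases hz with rfl | hz
    · exact Or.inl rfl
    rw [Walk.support_concat, List.mem_append] at hz
    rcases hz with hz | hz
    · exact Or.inr (Or.inr (hq z hz))
    · simp only [List.mem_singleton] at hz; exact Or.inr (Or.inl hz)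
  have hexY : ∃ p : G.Walk s2 s1, ∀ z ∈ p.support,
      z = s1 ∨ z = s2 ∨ z ∈ Side G S Y := by
    obtain ⟨q, hq⟩ := side_conn hYcl hcy2 hcy1
    refine ⟨Walk.cons hay2 (q.concat hay1.symm), ?_⟩
    intro z hz
    rw [Walk.support_cons, List.mem_cons] at hz
    rcases hz with rfl | hz
    · exact Or.inr (Or.inl rfl)
    rw [Walk.support_concat, List.mem_append] at hz
    rcases hz with hz | hz
    · exact Or.inr (Or.inr (hq z hz))
    · simp only [List.mem_singleton] at hz; exact Or.inl hz
  obtain ⟨pX, hpX, hpXpath, hpXmin⟩ := exists_min_path hexX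
  obtain ⟨pY, hpY, hpYpath, hpYmin⟩ := exists_min_path hexY
  -- both walks have length at least 2
  have hlenX : 2 ≤ pX.length := by
    by_contra hcon
    push_neg at hcon
    have h0 : pX.getVert 0 = s1 := pX.getVert_zero
    rcases Nat.lt_or_ge pX.length 1 with h | h
    · have h2 : pX.getVert 0 = s2 := pX.getVert_of_length_le (by omega)
      exact hne (h0.symm.trans h2)
    · have h1 : pX.getVert 1 = s2 := pX.getVert_of_length_le (by omega)
      have := pX.adj_getVert_succ (i := 0) (by omega)
      rw [h0, h1] at this
      exact hnadj this
  have hlenY : 2 ≤ pY.length := by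
    by_contra hcon
    push_neg at hcon
    have h0 : pY.getVert 0 = s2 := pY.getVert_zero
    rcases Nat.lt_or_ge pY.length 1 with h | h
    · have h2 : pY.getVert 0 = s1 := pY.getVert_of_length_le (by omega)
      exact hne (h2.symm.trans h0)
    · have h1 : pY.getVert 1 = s1 := pY.getVert_of_length_le (by omega)
      have := pY.adj_getVert_succ (i := 0) (by omega)
      rw [h0, h1] at this
      exact hnadj this.symm
  -- assemble the cycle
  have hpXnil : ¬ pX.Nil := Walk.not_nil_of_ne hne
  set w1 := pX.getVert 1 with hw1
  have hadj1 : G.Adj s1 w1 := pX.adj_snd hpXnil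
  set R : G.Walk w1 s1 := pX.tail.append pY with hR
  set Cyc : G.Walk s1 s1 := Walk.cons hadj1 R with hCyc
  have hXeq : Walk.cons hadj1 pX.tail = pX := Walk.cons_tail_eq pX hpXnil
  have hXsupp : pX.support = s1 :: pX.tail.support := by
    conv_lhs => rw [← hXeq]
    exact Walk.support_cons _ _
  have hXedges : pX.edges = s(s1, w1) :: pX.tail.edges := by
    conv_lhs => rw [← hXeq]
    exact Walk.edges_cons _ _
  have hs1X : s1 ∉ pX.tail.support := by
    have := hpXpath.support_nodup
    rw [hXsupp] at this
    exact (List.nodup_cons.mp this).1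
  have hpYnil : ¬ pY.Nil := Walk.not_nil_of_ne hne.symm
  have hYcons : pY.support = s2 :: pY.support.tail := by
    rw [← Walk.support_tail_of_not_nil pY hpYnil, Walk.cons_support_tail hpYnil]
  have hs2Y : s2 ∉ pY.support.tail := by
    have := hpYpath.support_nodup
    rw [hYcons] at this
    exact (List.nodup_cons.mp this).1
  -- characterisations of vertices
  have hmemX : ∀ z ∈ pX.tail.support, (z = s2 ∨ z ∈ Side G S X) ∧ z ≠ s1 := by
    intro z hz
    have hzX := hpX z (by rw [hXsupp]; exact List.mem_cons_of_mem _ hz)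
    have hzne : z ≠ s1 := fun h => hs1X (h ▸ hz)
    rcases hzX with rfl | h | h
    · exact absurd rfl hzne
    · exact ⟨Or.inl h, hzne⟩
    · exact ⟨Or.inr h, hzne⟩
  have hmemY : ∀ z ∈ pY.support.tail, (z = s1 ∨ z ∈ Side G S Y) ∧ z ≠ s2 := by
    intro z hz
    have hz' : z ∈ pY.support := List.mem_of_mem_tail hz
    have hzY := hpY z hz'
    have hzne : z ≠ s2 := fun h => hs2Y (h ▸ hz)
    rcases hzY with h | rfl | h
    · exact ⟨Or.inl h, hzne⟩
    · exact absurd rfl hzne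
    · exact ⟨Or.inr h, hzne⟩
  have hRsupp : R.support = pX.tail.support ++ pY.support.tail := by
    rw [hR, Walk.support_append]
  have hRpath : R.IsPath := by
    rw [Walk.isPath_def, hRsupp]
    refine List.Nodup.append ?_ ?_ ?_
    · have := hpXpath.support_nodup
      rw [hXsupp] at this
      exact (List.nodup_cons.mp this).2
    · exact hpYpath.support_nodup.sublist (List.tail_sublist _)
    · intro z hz1 hz2
      obtain ⟨hz1', hzs1⟩ := hmemX z hz1
      obtain ⟨hz2', hzs2⟩ := hmemY z hz2
      rcases hz1' with rfl | hz1'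
      · exact hzs2 rfl
      rcases hz2' with rfl | hz2'
      · exact hzs1 rfl
      · exact sides_disjoint hS hz1' hz2'
  have hw1side : w1 ∈ Side G S X := by
    have := hmemX w1 (by
      have : w1 ∈ pX.support := getVert_mem_support pX 1
      rw [hXsupp] at this
      rcases List.mem_cons.mp this with h | h
      · exact absurd h (G.ne_of_adj hadj1).symm
      · exact h)
    rcases this.1 with h | h
    · exact absurd (h ▸ hadj1) hnadj
    · exact h
  have hw1nY : w1 ∉ pY.support := by
    intro hmem
    rcases hpY w1 hmem with h | h | h
    · exact (G.ne_of_adj hadj1).symm h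
    · exact hnadj (h ▸ hadj1)
    · exact sides_disjoint hS hw1side h
  have hchord : s(s1, w1) ∉ R.edges := by
    rw [hR, Walk.edges_append, List.mem_append]
    rintro (h | h)
    · have : s(s1, w1) ∈ pX.tail.edges := h
      have hnodup : pX.edges.Nodup := hpXpath.isTrail.edges_nodup
      rw [hXedges] at hnodup
      exact (List.nodup_cons.mp hnodup).1 this
    · exact hw1nY (Walk.snd_mem_support_of_mem_edges pY h)
  have hcyc : Cyc.IsCycle := (Walk.cons_isCycle_iff R hadj1).mpr ⟨hRpath, hchord⟩
  have hcyclen : 4 ≤ Cyc.length := by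
    have h1 : pX.tail.length + 1 = pX.length := Walk.length_tail_add_one hpXnil
    have : Cyc.length = pX.tail.length + pY.length + 1 := by
      rw [hCyc, Walk.length_cons, hR, Walk.length_append]
    omega
  obtain ⟨x, y, hxs, hys, hxy, hnotedge⟩ := hG s1 Cyc hcyc hcyclen
  -- analyse the chord
  have hCycsupp : Cyc.support = s1 :: R.support := by rw [hCyc, Walk.support_cons]
  have hmem : ∀ z ∈ Cyc.support, z ∈ pX.support ∨ z ∈ pY.support := by
    intro z hz
    rw [hCycsupp, List.mem_cons, hRsupp, List.mem_append] at hz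
    rcases hz with rfl | hz | hz
    · exact Or.inl pX.start_mem_support
    · exact Or.inl (by rw [hXsupp]; exact List.mem_cons_of_mem _ hz)
    · exact Or.inr (List.mem_of_mem_tail hz)
  have hXedgesub : pX.edges ⊆ Cyc.edges := by
    rw [hCyc, Walk.edges_cons, hR, Walk.edges_append, hXedges]
    intro e he
    rcases List.mem_cons.mp he with rfl | he
    · exact List.mem_cons_self
    · exact List.mem_cons_of_mem _ (List.mem_append_left _ he)
  have hYedgesub : pY.edges ⊆ Cyc.edges := by
    rw [hCyc, Walk.edges_cons, hR, Walk.edges_append]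
    intro e he
    exact List.mem_cons_of_mem _ (List.mem_append_right _ he)
  have cross : ∀ a b, a ∈ pX.support → b ∈ pY.support → a ∉ pY.support → b ∉ pX.support →
      G.Adj a b → False := by
    intro a b haX hbY haY hbX hab
    have haside : a ∈ Side G S X := by
      rcases hpX a haX with rfl | rfl | h
      · exact absurd pY.end_mem_support haY
      · exact absurd pY.start_mem_support haY
      · exact h
    have hbside : b ∈ Side G S Y := by
      rcases hpY b hbY with rfl | rfl | h
      · exact absurd pX.start_mem_support hbX
      · exact absurd pX.end_mem_support hbX
      · exact h
    exact sides_disjoint hS (side_adj haside hab (side_not_mem hbside)) hbside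
  rcases hmem x hxs with hxX | hxY <;> rcases hmem y hys with hyX | hyY
  · exact hnotedge (hXedgesub (mem_edges_of_min pX hpX hpXmin hxX hyX hxy))
  · by_cases h1' : x ∈ pY.support
    · exact hnotedge (hYedgesub (mem_edges_of_min pY hpY hpYmin h1' hyY hxy))
    by_cases h2' : y ∈ pX.support
    · exact hnotedge (hXedgesub (mem_edges_of_min pX hpX hpXmin hxX h2' hxy))
    exact cross x y hxX hyY h1' h2' hxy
  · by_cases h1' : y ∈ pY.support
    · exact hnotedge (hYedgesub (mem_edges_of_min pY hpY hpYmin hxY h1' hxy))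
    by_cases h2' : x ∈ pX.support
    · exact hnotedge (hXedgesub (mem_edges_of_min pX hpX hpXmin h2' hyX hxy))
    exact cross y x hyX hxY h1' h2' hxy.symm
  · exact hnotedge (hYedgesub (mem_edges_of_min pY hpY hpYmin hxY hyY hxy))

end Dirac

/-! ### Common neighbour lemma for chordal graphs -/

lemma common_nbr (hG : IsChordal G) (C K : Set V)
    (hconn : ∀ c ∈ C, ∀ c' ∈ C, ∃ p : G.Walk c c', ∀ z ∈ p.support, z ∈ C)
    (hKcl : G.IsClique K) (hd : ∀ k ∈ K, k ∉ C)
    (hnbr : ∀ k ∈ K, ∃ c ∈ C, G.Adj k c)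
    (hCne : C.Nonempty) (hKfin : K.Finite) :
    ∃ c ∈ C, ∀ k ∈ K, G.Adj c k := by
  classical
  revert hKcl hd hnbr
  refine Set.Finite.induction_on K hKfin
    (motive := fun K _ => G.IsClique K → (∀ k ∈ K, k ∉ C) → (∀ k ∈ K, ∃ c ∈ C, G.Adj k c) →
      ∃ c ∈ C, ∀ k ∈ K, G.Adj c k) ?_ ?_
  · intro _ _ _
    obtain ⟨c, hc⟩ := hCne
    exact ⟨c, hc, fun k hk => absurd hk (Set.notMem_empty k)⟩
  · intro x K₀ hxK₀ hK₀fin IH hKcl hd hnbr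
    obtain ⟨c, hcC, hc⟩ := IH (hKcl.subset (Set.subset_insert x K₀))
      (fun k hk => hd k (Set.mem_insert_of_mem x hk))
      (fun k hk => hnbr k (Set.mem_insert_of_mem x hk))
    by_cases hcx : G.Adj c x
    · refine ⟨c, hcC, fun k hk => ?_⟩
      rcases Set.mem_insert_iff.mp hk with rfl | hk
      · exact hcx
      · exact hc k hk
    obtain ⟨cx, hcxC, hadjx⟩ := hnbr x (Set.mem_insert x K₀)
    rcases Set.eq_empty_or_nonempty K₀ with rfl | hK₀ne
    · exact ⟨cx, hcxC, fun k hk => by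
        rcases Set.mem_insert_iff.mp hk with rfl | hk
        · exact hadjx.symm
        · exact absurd hk (Set.notMem_empty k)⟩
    have hxC : x ∉ C := hd x (Set.mem_insert x K₀)
    -- minimal walk from x to c with all interior vertices in C
    have hex : ∃ p : G.Walk x c, ∀ z ∈ p.support, z = x ∨ z ∈ C := by
      obtain ⟨q, hq⟩ := hconn cx hcxC c hcC
      refine ⟨Walk.cons hadjx q, ?_⟩
      intro z hz
      rw [Walk.support_cons, List.mem_cons] at hz
      exact hz.imp id (fun h => hq z h)
    obtain ⟨W, hW, hWpath, hWmin⟩ := exists_min_path hex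
    set n := W.length with hn
    have hn1 : 1 ≤ n := by
      by_contra hcon
      push_neg at hcon
      have : W.getVert 0 = c := W.getVert_of_length_le (by omega)
      rw [W.getVert_zero] at this
      exact hxC (this ▸ hcC)
    have hn2 : 2 ≤ n := by
      by_contra hcon
      push_neg at hcon
      have h1 : W.getVert 1 = c := W.getVert_of_length_le (by omega)
      have := W.adj_getVert_succ (i := 0) (by omega)
      rw [W.getVert_zero, h1] at this
      exact hcx this.symm
    -- all later vertices lie in C
    have hvC : ∀ i, 1 ≤ i → i ≤ n → W.getVert i ∈ C := by
      intro i hi1 hin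
      rcases hW (W.getVert i) (getVert_mem_support W i) with hx | hC
      · -- shortcut: drop i edges
        exfalso
        have hdropP : ∀ z ∈ (wdrop W i).support, z = x ∨ z ∈ C :=
          fun z hz => hW z (support_wdrop_subset W i hz)
        have hlen := length_wdrop W i
        have hle := hWmin ((wdrop W i).copy hx rfl) (by
          intro z hz
          rw [Walk.support_copy] at hz
          exact hdropP z hz)
        rw [Walk.length_copy, hlen] at hle
        omega
      · exact hC
    -- first index (≥ 1) of adjacency for each k ∈ K₀
    have hexi : ∀ k ∈ K₀, ∃ i, 1 ≤ i ∧ i ≤ n ∧ G.Adj k (W.getVert i) := by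
      intro k hk
      exact ⟨n, hn1, le_rfl, by rw [W.getVert_length]; exact (hc k hk).symm⟩
    set f : V → ℕ := fun k => if h : k ∈ K₀ then Nat.find (hexi k h) else 0 with hf
    obtain ⟨kstar, hkstar, hmax⟩ :=
      (hK₀fin.toFinset).exists_max_image f (by
        obtain ⟨k, hk⟩ := hK₀ne
        exact ⟨k, hK₀fin.mem_toFinset.mpr hk⟩)
    rw [Set.Finite.mem_toFinset] at hkstar
    have hmax' : ∀ k (hk : k ∈ K₀), Nat.find (hexi k hk) ≤ f kstar := by
      intro k hk
      have h := hmax k (hK₀fin.mem_toFinset.mpr hk)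
      have e : f k = Nat.find (hexi k hk) := by simp [hf, hk]
      rwa [e] at h
    set j := f kstar with hj
    have hjspec : 1 ≤ j ∧ j ≤ n ∧ G.Adj kstar (W.getVert j) := by
      rw [hj, hf]
      simp only [dif_pos hkstar]
      exact Nat.find_spec (hexi kstar hkstar)
    have hjmin : ∀ i, 1 ≤ i → i ≤ n → G.Adj kstar (W.getVert i) → j ≤ i := by
      intro i h1 h2 h3
      rw [hj, hf]
      simp only [dif_pos hkstar]
      exact Nat.find_le ⟨h1, h2, h3⟩
    by_cases hj1 : j = 1
    · -- W.getVert 1 is adjacent to everything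
      refine ⟨W.getVert 1, hvC 1 le_rfl (by omega), fun k hk => ?_⟩
      rcases Set.mem_insert_iff.mp hk with rfl | hk
      · have := W.adj_getVert_succ (i := 0) (by omega)
        rw [W.getVert_zero] at this
        exact this.symm
      · have h1 : Nat.find (hexi k hk) ≤ j := hmax' k hk
        have h2 := Nat.find_spec (hexi k hk)
        have : Nat.find (hexi k hk) = 1 := by omega
        rw [this] at h2
        exact h2.2.2.symm
    -- j ≥ 2 : build a chordless cycle, contradiction
    exfalso
    have hj2 : 2 ≤ j := by omega
    have hjn : j ≤ n := hjspec.2.1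
    have hkC : kstar ∉ C := hd kstar (Set.mem_insert_of_mem x hkstar)
    have hkx : kstar ≠ x := fun h => hxK₀ (h ▸ hkstar)
    have hadjkx : G.Adj kstar x := (hKcl (Set.mem_insert x K₀)
      (Set.mem_insert_of_mem x hkstar) (fun h => hkx h.symm)).symm
    set T := wtake W j with hT
    have hTpath : T.IsPath := isPath_wtake hWpath j
    have hTsupp : ∀ z ∈ T.support, z = x ∨ z ∈ C :=
      fun z hz => hW z (support_wtake_subset W j hz)
    have hkT : kstar ∉ T.support := by
      intro h
      rcases hTsupp kstar h with h' | h'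
      · exact hkx h'
      · exact hkC h'
    set R := T.concat hjspec.2.2.symm with hRdef
    have hRsupp : R.support = T.support ++ [kstar] := by
      rw [hRdef, Walk.support_concat]
    have hRpath : R.IsPath := by
      rw [Walk.isPath_def, hRsupp]
      exact List.Nodup.append hTpath.support_nodup (List.nodup_singleton kstar)
        (fun z hz1 hz2 => by
          rw [List.mem_singleton] at hz2
          exact hkT (hz2 ▸ hz1))
    set Cyc := Walk.cons hadjkx R with hCycdef
    have hWsuppmem : ∀ z ∈ W.support, z = x ∨ z ∈ C := hW
    have hedge : s(kstar, x) ∉ R.edges := by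
      rw [hRdef, Walk.edges_concat, List.concat_eq_append, List.mem_append]
      rintro (h | h)
      · have := Walk.fst_mem_support_of_mem_edges T h
        exact hkT this
      · rw [List.mem_singleton] at h
        rw [Sym2.eq_iff] at h
        rcases h with ⟨h1, h2⟩ | ⟨h1, h2⟩
        · exact hkx h2.symm
        · exact hxC (h2.symm ▸ hvC j (by omega) hjn)
    have hcyc : Cyc.IsCycle := (Walk.cons_isCycle_iff R hadjkx).mpr ⟨hRpath, (by
      rw [Sym2.eq_swap] at hedge ⊢
      exact hedge)⟩
    have hTlen : T.length = j := by
      rw [hT, length_wtake]; omega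
    have hcyclen : 4 ≤ Cyc.length := by
      rw [hCycdef, Walk.length_cons, hRdef, Walk.length_concat, hTlen]
      omega
    obtain ⟨a, b, has, hbs, hab, hnotedge⟩ := hG kstar Cyc hcyc hcyclen
    -- characterise support of the cycle
    have hsupp : ∀ z ∈ Cyc.support, z = kstar ∨ ∃ i, i ≤ j ∧ z = W.getVert i := by
      intro z hz
      rw [hCycdef, Walk.support_cons, List.mem_cons] at hz
      rcases hz with rfl | hz
      · exact Or.inl rfl
      rw [hRsupp, List.mem_append] at hz
      rcases hz with hz | hz
      · obtain ⟨i, hi, hiW⟩ := Walk.mem_support_iff_exists_getVert.mp hz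
        refine Or.inr ⟨i, ?_, ?_⟩
        · rw [hT, length_wtake] at hiW; omega
        · rw [← hi, hT, getVert_wtake W j i (by rw [hT, length_wtake] at hiW; omega)]
      · rw [List.mem_singleton] at hz
        exact Or.inl hz
    have hCycedges : Cyc.edges = s(kstar, x) :: (T.edges ++ [s(W.getVert j, kstar)]) := by
      rw [hCycdef, Walk.edges_cons, hRdef, Walk.edges_concat, List.concat_eq_append]
    -- the two cases of chord endpoints
    have hcase1 : ∀ i, i ≤ j → G.Adj kstar (W.getVert i) →
        s(kstar, W.getVert i) ∈ Cyc.edges := by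
      intro i hij hadj
      rcases Nat.eq_zero_or_pos i with rfl | hipos
      · rw [W.getVert_zero, hCycedges]
        exact List.mem_cons_self
      rcases eq_or_lt_of_le hij with heq | hilt
      · rw [heq, hCycedges]
        have hsw : s(kstar, W.getVert j) = s(W.getVert j, kstar) := Sym2.eq_swap
        rw [hsw]
        exact List.mem_cons_of_mem _ (List.mem_append_right _ (List.mem_singleton_self _))
      · exfalso
        have := hjmin i hipos (by omega) hadj
        omega
    have hcase2 : ∀ i i', i < i' → i' ≤ j → G.Adj (W.getVert i) (W.getVert i') →
        s(W.getVert i, W.getVert i') ∈ Cyc.edges := by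
      intro i i' hii hij hadj
      have hi1 : i' = i + 1 := by
        by_contra hne'
        exact not_adj_of_min W hW hWmin (i := i) (j := i') (by omega) (by omega) hadj
      subst hi1
      have hT1 : s(T.getVert i, T.getVert (i+1)) ∈ T.edges :=
        edge_getVert_succ_mem_edges T i (by rw [hTlen]; omega)
      rw [hT, getVert_wtake W j i (by omega), getVert_wtake W j (i+1) (by omega)] at hT1
      rw [hCycedges]
      exact List.mem_cons_of_mem _ (List.mem_append_left _ hT1)
    -- now eliminate all chords
    rcases hsupp a has with rfl | ⟨i, hij, rfl⟩ <;> rcases hsupp b hbs with rfl | ⟨i', hij', rfl⟩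
    · exact (G.irrefl) hab
    · exact hnotedge (hcase1 i' hij' hab)
    · exact hnotedge (by rw [Sym2.eq_swap]; exact hcase1 i hij hab.symm)
    · rcases lt_trichotomy i i' with h | h | h
      · exact hnotedge (hcase2 i i' h hij' hab)
      · exact (G.irrefl) (h ▸ hab)
      · exact hnotedge (by rw [Sym2.eq_swap]; exact hcase2 i' i h hij hab.symm)

/-! ### A minimum separator misses part of each maximal clique -/

lemma diff_nonempty [Finite V] (hG : IsChordal G) {X Y S : Set V}
    (hX : IsMaxClique G X) (hY : IsMaxClique G Y) (hne : X ≠ Y)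
    (hS : SeparatesSets G X Y S)
    (heff : ∀ S' : Set V, SeparatesSets G X Y S' → S.ncard ≤ S'.ncard) :
    ∃ a, a ∈ X ∧ a ∉ S := by
  by_contra hcon
  push_neg at hcon
  have hXsub : X ⊆ S := hcon
  have hXsep : SeparatesSets G X Y X := fun a ha b hb p => ⟨a, ha, p.start_mem_support⟩
  have hXS : X = S :=
    Set.eq_of_subset_of_ncard_le hXsub (heff X hXsep) (Set.toFinite S)
  have hYS : ∃ b, b ∈ Y ∧ b ∉ S := by
    by_contra hcon'
    push_neg at hcon'
    have : Y ⊆ X := hXS ▸ hcon'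
    exact hne ((hY.2 X hX.1 this).symm)
  obtain ⟨b, hbY, hbS⟩ := hYS
  have hSsymm : SeparatesSets G Y X S := sep_symm hS
  have heff' : ∀ S' : Set V, SeparatesSets G Y X S' → S.ncard ≤ S'.ncard :=
    fun S' h => heff S' (sep_symm h)
  have hnbr : ∀ s ∈ S, ∃ c ∈ Side G S Y, G.Adj s c :=
    fun s hs => sep_nbr hSsymm heff' (Set.toFinite S) hY.1 ⟨b, hbY, hbS⟩ hs
  have hconn : ∀ c ∈ Side G S Y, ∀ c' ∈ Side G S Y,
      ∃ p : G.Walk c c', ∀ z ∈ p.support, z ∈ Side G S Y :=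
    fun c hc c' hc' => side_conn hY.1 hc hc'
  have hKcl : G.IsClique S := hXS ▸ hX.1
  obtain ⟨c, hcC, hc⟩ := common_nbr hG (Side G S Y) S hconn hKcl
    (fun k hk => fun h => side_not_mem h hk)
    hnbr ⟨b, mem_side_of hbY hbS⟩ (Set.toFinite S)
  have hcX : c ∉ X := fun h => side_not_mem hcC (hXS ▸ h)
  have hclique : G.IsClique (insert c X) := by
    refine hX.1.insert ?_
    intro b' hb' hne'
    exact hc b' (hXS ▸ hb')
  have := hX.2 (insert c X) hclique (Set.subset_insert c X)
  exact hcX (this ▸ Set.mem_insert c X)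

end ChordalSep

theorem stmt_5 {V : Type*} [Finite V] (G : SimpleGraph V) (hG : IsChordal G)
    (X Y : Set V) (hX : IsMaxClique G X) (hY : IsMaxClique G Y) (hne : X ≠ Y)
    (S : Set V) (hS : SeparatesSets G X Y S)
    (heff : ∀ S' : Set V, SeparatesSets G X Y S' → S.ncard ≤ S'.ncard) :
    IsMinimalSeparator G S ∧ G.IsClique S := by
  classical
  obtain ⟨u, huX, huS⟩ := ChordalSep.diff_nonempty hG hX hY hne hS heff
  have hSsymm : SeparatesSets G Y X S := ChordalSep.sep_symm hS
  have heff' : ∀ S' : Set V, SeparatesSets G Y X S' → S.ncard ≤ S'.ncard :=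
    fun S' h => heff S' (ChordalSep.sep_symm h)
  obtain ⟨v, hvY, hvS⟩ := ChordalSep.diff_nonempty hG hY hX hne.symm hSsymm heff'
  have hnbrX : ∀ s ∈ S, ∃ c ∈ ChordalSep.Side G S X, G.Adj s c :=
    fun s hs => ChordalSep.sep_nbr hS heff (Set.toFinite S) hX.1 ⟨u, huX, huS⟩ hs
  have hnbrY : ∀ s ∈ S, ∃ c ∈ ChordalSep.Side G S Y, G.Adj s c :=
    fun s hs => ChordalSep.sep_nbr hSsymm heff' (Set.toFinite S) hY.1 ⟨v, hvY, hvS⟩ hs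
  constructor
  · refine ⟨u, v, ⟨huS, hvS, fun p => hS u huX v hvY p⟩, ?_⟩
    intro T hTS hTsep
    refine Set.Subset.antisymm hTS ?_
    intro s hsS
    by_contra hsT
    obtain ⟨cx, hcxX, hacx⟩ := hnbrX s hsS
    obtain ⟨cy, hcyY, hacy⟩ := hnbrY s hsS
    obtain ⟨p1, hp1⟩ := ChordalSep.side_conn hX.1 (ChordalSep.mem_side_of huX huS) hcxX
    obtain ⟨p2, hp2⟩ := ChordalSep.side_conn hY.1 hcyY (ChordalSep.mem_side_of hvY hvS)
    set W : G.Walk u v := p1.append (Walk.cons hacx.symm (Walk.cons hacy p2)) with hW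
    obtain ⟨t, htT, htW⟩ := hTsep.2.2 W
    have htS : t ∈ S := hTS htT
    rw [hW, Walk.mem_support_append_iff] at htW
    rcases htW with h | h
    · exact ChordalSep.side_not_mem (hp1 t h) htS
    rw [Walk.support_cons, List.mem_cons] at h
    rcases h with rfl | h
    · exact ChordalSep.side_not_mem hcxX htS
    rw [Walk.support_cons, List.mem_cons] at h
    rcases h with rfl | h
    · exact hsT htT
    · exact ChordalSep.side_not_mem (hp2 t h) htS
  · intro s1 h1 s2 h2 hne12
    exact ChordalSep.adj_of_sep hG hS hX.1 hY.1 h1 h2 hne12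
      (hnbrX s1 h1) (hnbrX s2 h2) (hnbrY s1 h1) (hnbrY s2 h2)
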